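/- arXiv:1909.05204 — 4 statements merged into one kernel-verified Lean document; each statement's English description precedes it below -/
import Mathlib

section
/- In the view-doubling protocol with minimal initial view k and maximal initial view l (k ≤ l), the overlap duration in view v between the latest node and the earliest node satisfies t(p_1, v+1) − t(p_n, v) ≥ c if and only if β(2^v + 2^k − 2^l) ≥ c; consequently, for every c ≥ 0 there exists a view v* such that for all v ≥ v* all nodes simultaneously execute view v for at least duration c. -/
/-! The overlap in view `v` is `t(pₙ, v+1) − t(p₁, v) = β(2^(v+1) − 2^l) − β(2^v − 2^k)`,
which simplifies to `β(2^v + 2^k − 2^l)`; since `2^v → ∞` and `β > 0`, it exceeds any fixed `c`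
from some view on. -/

open Filter

/-- `t(p, v) = β(2^v − 2^r)` for a node `p` whose view at time `0` is `r`. -/
def viewEntryTime (β : ℝ) (r v : ℕ) : ℝ := β * (2 ^ v - 2 ^ r)

theorem viewEntryTime_succ_sub (β : ℝ) (k l v : ℕ) :
    viewEntryTime β l (v + 1) - viewEntryTime β k v = β * (2 ^ v + 2 ^ k - 2 ^ l) := by
  unfold viewEntryTime
  ring

theorem tendsto_mul_two_pow_add_atTop {β : ℝ} (hβ : 0 < β) (a : ℝ) :
    Tendsto (fun v : ℕ => β * (2 ^ v + a)) atTop atTop :=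
  (tendsto_atTop_add_const_right _ a
    (tendsto_pow_atTop_atTop_of_one_lt one_lt_two)).const_mul_atTop hβ

theorem view_doubling_overlap_general (β c : ℝ) (hβ : 0 < β) (k l : ℕ) :
    (∀ v : ℕ,
      β * ((2 : ℝ) ^ (v + 1) - 2 ^ l) - β * ((2 : ℝ) ^ v - 2 ^ k) ≥ c ↔
        β * ((2 : ℝ) ^ v + 2 ^ k - 2 ^ l) ≥ c) ∧
    (0 ≤ c → ∃ vstar : ℕ, ∀ v ≥ vstar, β * ((2 : ℝ) ^ v + 2 ^ k - 2 ^ l) ≥ c) := by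
  refine ⟨fun v => by rw [← viewEntryTime_succ_sub]; rfl, fun _ => ?_⟩
  obtain ⟨vstar, hvstar⟩ := eventually_atTop.1 <|
    (tendsto_mul_two_pow_add_atTop hβ (2 ^ k - 2 ^ l)).eventually_ge_atTop c
  exact ⟨vstar, fun v hv => by simpa only [add_sub_assoc] using hvstar v hv⟩

/-- View doubling: the node with maximal initial view `l` enters each view first and the
node with minimal initial view `k` enters last.  The overlap in view `v` (time from the
last node entering `v` until the first node entering `v+1`) is at least `c` iff
`β(2^v + 2^k − 2^l) ≥ c`; consequently for every `c ≥ 0` there is a view `v*` such that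
for all `v ≥ v*` all nodes execute view `v` simultaneously for at least duration `c`. -/
theorem view_doubling_overlap (β c : ℝ) (hβ : 0 < β) (k l : ℕ) (hkl : k ≤ l) :
    (∀ v : ℕ,
      β * ((2 : ℝ) ^ (v + 1) - 2 ^ l) - β * ((2 : ℝ) ^ v - 2 ^ k) ≥ c ↔
        β * ((2 : ℝ) ^ v + 2 ^ k - 2 ^ l) ≥ c) ∧
    (0 ≤ c → ∃ vstar : ℕ, ∀ v ≥ vstar, β * ((2 : ℝ) ^ v + 2 ^ k - 2 ^ l) ≥ c) :=
  view_doubling_overlap_general β c hβ k l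
end

section
/- In the view-doubling protocol, if wishToAdvance is invoked at every interval γ with 0 < γ ≤ β, then at every time the wish counter is at least the current view counter; hence every view transition results in a proposeView signal. -/
theorem Finset.card_le_floor_sum_div {ι : Type*} (s : Finset ι) (f : ι → ℝ) {γ : ℝ}
    (hγ : 0 < γ) (hf : ∀ i ∈ s, γ ≤ f i) : s.card ≤ ⌊(∑ i ∈ s, f i) / γ⌋₊ :=
  Nat.le_floor <| (le_div_iff₀ hγ).2 <| by
    simpa only [nsmul_eq_mul] using Finset.card_nsmul_le_sum s f γ hf

theorem view_doubling_wish_dominates_general (β γ : ℝ) (hγ : 0 < γ)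
    (hγβ : γ ≤ β) (r v : ℕ) :
    v - r ≤ ⌊(∑ j ∈ Finset.Ico r v, β * 2 ^ j) / γ⌋₊ := by
  have hβ : 0 ≤ β := hγ.le.trans hγβ
  have hview : ∀ j ∈ Finset.Ico r v, γ ≤ β * 2 ^ j := fun j _ =>
    hγβ.trans (le_mul_of_one_le_right hβ (one_le_pow₀ one_le_two))
  simpa only [Nat.card_Ico] using Finset.card_le_floor_sum_div _ _ hγ hview

/-- In the view-doubling protocol with `wishToAdvance` invoked every `γ` with
`0 < γ ≤ β`: when the node's view counter reaches `v` (after elapsed time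
`∑_{j=r}^{v-1} β·2^j` since its start at view `r`), the wish counter (the number of
whole `γ`-intervals elapsed) is at least `v − r`; hence every view transition results
in a `proposeView` signal. -/
theorem view_doubling_wish_dominates (β γ : ℝ) (hβ : 0 < β) (hγ : 0 < γ)
    (hγβ : γ ≤ β) (r v : ℕ) (hrv : r ≤ v) :
    v - r ≤ ⌊(∑ j ∈ Finset.Ico r v, β * 2 ^ j) / γ⌋₊ :=
  view_doubling_wish_dominates_general β γ hγ hγβ r v
end

section
/- After GST, in the broadcast-based synchronizer, if some honest node enters view v at time t, then every honest node enters view v by time t + 2Δ. -/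
/-!
Any `2f + 1` senders include at least `f + 1` honest ones, since at most `f` nodes are
Byzantine. Those `f + 1` messages reach every honest node within `Δ`, so all honest nodes
multicast `newRound(v)` by `t + Δ`; as there are at least `2f + 1` honest nodes, their messages
give every honest node a quorum by `t + 2Δ`.
-/

theorem Finset.le_card_sdiff_of_add_le {α : Type*} [DecidableEq α] {s t : Finset α} {k f : ℕ}
    (hs : k + f ≤ s.card) (ht : t.card ≤ f) : k ≤ (s \ t).card := by
  have := Finset.le_card_sdiff t s
  omega

theorem broadcast_sync_bound_general {Node : Type*} [DecidableEq Node]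
    (Nodes B : Finset Node) (f : ℕ) (Δ t : ℝ)
    (hBcard : B.card ≤ f) (hn : 3 * f + 1 ≤ Nodes.card)
    (multicastBy entersBy : Node → ℝ → Prop)
    -- the 2f+1 senders whose messages the first honest node received by time t
    (hsent : ∃ T ⊆ Nodes, 2 * f + 1 ≤ T.card ∧ ∀ q ∈ T, multicastBy q t)
    -- rule: upon receiving f+1 newRound(v) messages (delivered within Δ),
    -- an honest node multicasts newRound(v)
    (hrule1 : ∀ p ∈ Nodes \ B, ∀ s : ℝ,
      (∃ T ⊆ Nodes, f + 1 ≤ T.card ∧ ∀ q ∈ T, multicastBy q s) →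
        multicastBy p (s + Δ))
    -- rule: upon receiving 2f+1 newRound(v) messages (delivered within Δ),
    -- an honest node enters view v
    (hrule2 : ∀ p ∈ Nodes \ B, ∀ s : ℝ,
      (∃ T ⊆ Nodes, 2 * f + 1 ≤ T.card ∧ ∀ q ∈ T, multicastBy q s) →
        entersBy p (s + Δ)) :
    (∃ T ⊆ Nodes \ B, f + 1 ≤ T.card ∧ ∀ q ∈ T, multicastBy q t) ∧
    (∀ p ∈ Nodes \ B, multicastBy p (t + Δ)) ∧
    (∀ p ∈ Nodes \ B, entersBy p (t + Δ + Δ)) := by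
  obtain ⟨T, hTNodes, hTcard, hTsent⟩ := hsent
  have honest_senders : f + 1 ≤ (T \ B).card :=
    Finset.le_card_sdiff_of_add_le (by omega) hBcard
  have honest_quorum : 2 * f + 1 ≤ (Nodes \ B).card :=
    Finset.le_card_sdiff_of_add_le (by omega) hBcard
  have all_multicast : ∀ p ∈ Nodes \ B, multicastBy p (t + Δ) := fun p hp =>
    hrule1 p hp t ⟨T, hTNodes, by omega, hTsent⟩
  refine ⟨⟨T \ B, Finset.sdiff_subset_sdiff hTNodes le_rfl, honest_senders,
    fun q hq => hTsent q (Finset.mem_sdiff.mp hq).1⟩, all_multicast, fun p hp => ?_⟩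
  exact hrule2 p hp (t + Δ) ⟨Nodes \ B, Finset.sdiff_subset, honest_quorum, all_multicast⟩

/-- Broadcast-based synchronizer after GST.  If an honest node enters view `v` at time
`t` (i.e., `2f + 1` nodes have multicast `newRound(v)` by time `t`), then:
(i) at least `f + 1` honest nodes have multicast `newRound(v)` by `t`;
(ii) by `t + Δ` every honest node has multicast `newRound(v)`;
(iii) by `t + 2Δ` every honest node enters view `v`. -/
theorem broadcast_sync_bound {Node : Type*} [DecidableEq Node]
    (Nodes B : Finset Node) (f : ℕ) (Δ t : ℝ) (hΔ : 0 ≤ Δ)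
    (hB : B ⊆ Nodes) (hBcard : B.card ≤ f) (hn : 3 * f + 1 ≤ Nodes.card)
    (multicastBy entersBy : Node → ℝ → Prop)
    -- the 2f+1 senders whose messages the first honest node received by time t
    (hsent : ∃ T ⊆ Nodes, 2 * f + 1 ≤ T.card ∧ ∀ q ∈ T, multicastBy q t)
    -- rule: upon receiving f+1 newRound(v) messages (delivered within Δ),
    -- an honest node multicasts newRound(v)
    (hrule1 : ∀ p ∈ Nodes \ B, ∀ s : ℝ,
      (∃ T ⊆ Nodes, f + 1 ≤ T.card ∧ ∀ q ∈ T, multicastBy q s) →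
        multicastBy p (s + Δ))
    -- rule: upon receiving 2f+1 newRound(v) messages (delivered within Δ),
    -- an honest node enters view v
    (hrule2 : ∀ p ∈ Nodes \ B, ∀ s : ℝ,
      (∃ T ⊆ Nodes, 2 * f + 1 ≤ T.card ∧ ∀ q ∈ T, multicastBy q s) →
        entersBy p (s + Δ)) :
    (∃ T ⊆ Nodes \ B, f + 1 ≤ T.card ∧ ∀ q ∈ T, multicastBy q t) ∧
    (∀ p ∈ Nodes \ B, multicastBy p (t + Δ)) ∧
    (∀ p ∈ Nodes \ B, entersBy p (t + Δ + Δ)) :=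
  broadcast_sync_bound_general Nodes B f Δ t hBcard hn multicastBy entersBy hsent hrule1 hrule2
end

section
/- Given β > 0, k ≤ l, and c ≥ 0, the minimal view v* with β(2^{v*} + 2^k − 2^l) ≥ c satisfies 2^{v*} ≥ c/β + 2^l − 2^k, and the synchronization latency t(p_firstnode, v*) = β(2^{v*} − 2^k) grows without bound as l − k → ∞ for fixed c > β·2^k. -/
section OrderedField

variable {K : Type*} [Field K] [LinearOrder K] [IsStrictOrderedRing K]

theorem div_add_sub_le_of_le_mul_add_sub {β c x y z : K} (hβ : 0 < β)
    (h : c ≤ β * (x + y - z)) : c / β + z - y ≤ x := by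
  have := (div_le_iff₀' hβ).2 h
  linarith

theorem add_mul_sub_two_mul_le_of_le_mul_add_sub {β c x y z : K}
    (h : c ≤ β * (x + y - z)) : c + β * (z - 2 * y) ≤ β * (x - y) := by
  have hsplit : β * (x - y) = β * (x + y - z) + β * (z - 2 * y) := by ring
  linarith

end OrderedField

theorem exists_le_mul_two_pow_sub_two {β : ℝ} (hβ : 0 < β) (M : ℝ) :
    ∃ l : ℕ, M ≤ β * ((2 : ℝ) ^ l - 2) := by
  obtain ⟨l, hl⟩ := pow_unbounded_of_one_lt (M / β + 2) (one_lt_two : (1 : ℝ) < 2)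
  refine ⟨l, (div_le_iff₀' hβ).1 ?_⟩
  linarith

theorem view_doubling_latency_unbounded_general (β c : ℝ) (hβ : 0 < β) :
    (∀ k l v : ℕ, k ≤ l → β * ((2 : ℝ) ^ v + 2 ^ k - 2 ^ l) ≥ c →
      (2 : ℝ) ^ v ≥ c / β + 2 ^ l - 2 ^ k) ∧
    (∀ M : ℝ, ∃ k l : ℕ, k ≤ l ∧ ∀ v : ℕ,
      (β * ((2 : ℝ) ^ v + 2 ^ k - 2 ^ l) ≥ c ∧
        ∀ w : ℕ, β * ((2 : ℝ) ^ w + 2 ^ k - 2 ^ l) ≥ c → v ≤ w) →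
      β * ((2 : ℝ) ^ v - 2 ^ k) ≥ M) := by
  refine ⟨fun k l v _ h => div_add_sub_le_of_le_mul_add_sub hβ h, fun M => ?_⟩
  -- With `k = 0`, any view reaching overlap `c` already has latency `≥ c + β (2^l - 2)`.
  obtain ⟨l, hl⟩ := exists_le_mul_two_pow_sub_two hβ (M - c)
  refine ⟨0, l, l.zero_le, fun v ⟨hv, _⟩ => ?_⟩
  have hlat := add_mul_sub_two_mul_le_of_le_mul_add_sub hv
  rw [pow_zero, mul_one] at hlat
  linarith

/-- View doubling latency is unbounded.  (i) Any view `v` achieving overlap `c`, i.e.,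
`β(2^v + 2^k − 2^l) ≥ c`, satisfies `2^v ≥ c/β + 2^l − 2^k`.  (ii) For every bound `M`
there are initial views `k ≤ l` such that the minimal view `v*` achieving overlap `c`
has synchronization latency `t(p_k, v*) = β(2^{v*} − 2^k) ≥ M`. -/
theorem view_doubling_latency_unbounded (β c : ℝ) (hβ : 0 < β) (hc : 0 ≤ c) :
    (∀ k l v : ℕ, k ≤ l → β * ((2 : ℝ) ^ v + 2 ^ k - 2 ^ l) ≥ c →
      (2 : ℝ) ^ v ≥ c / β + 2 ^ l - 2 ^ k) ∧
    (∀ M : ℝ, ∃ k l : ℕ, k ≤ l ∧ ∀ v : ℕ,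
      (β * ((2 : ℝ) ^ v + 2 ^ k - 2 ^ l) ≥ c ∧
        ∀ w : ℕ, β * ((2 : ℝ) ^ w + 2 ^ k - 2 ^ l) ≥ c → v ≤ w) →
      β * ((2 : ℝ) ^ v - 2 ^ k) ≥ M) :=
  view_doubling_latency_unbounded_general β c hβ
end
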